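/- Let G be a finite simple graph with N ≥ 2 vertices and M ≥ 1 edges, with degree sequence d_(1) ≥ … ≥ d_(N), and let c be a {0,1}-characteristic with n1 ≥ 2 vertices having characteristic 1. Set δ = 2M/(N(N−1)), m̄11 = (n1(n1−1)/2)·δ, dyadicity D = m11/m̄11, UBm11 = min(M, binom(n1,2), ⌈(Σ_{i=1}^{n1} min(d_(i), n1−1))/2⌉), LBm11 = max(0, ⌊(T(n1) − H(n0))/2⌋) (difference in the integers), D_max = UBm11/m̄11 and D_min = LBm11/m̄11. Then D_min ≤ D ≤ D_max (as real numbers). -/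

import Mathlib

/-!
Let `S` be the set of vertices of characteristic `1`. Twice `m11` is the degree sum over `S` in
the subgraph of edges inside `S`, where every degree is at most `min (d v) (n1 - 1)`; since the
`n1` largest entries of a degree sequence dominate any `n1` of its entries, this gives the upper
bound. Conversely the degree sum over `S` is `2 m11` plus the number of edges leaving `S`, and
double counting bounds the latter by the degree sum of the complement. Comparing with the `n1`
smallest and the `n0` largest degrees gives `T(n1) ≤ 2 m11 + H(n0)`. Finally `m̄11 ≥ 0`, so
dividing by it preserves both inequalities.
-/

/-- The number of edges of `G` whose two endpoints both have characteristic `1` (`true`). -/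
def m11 {V : Type*} [Fintype V] [DecidableEq V] (G : SimpleGraph V) [DecidableRel G.Adj]
    (c : V → Bool) : ℕ :=
  (G.edgeFinset.filter (fun e => ∀ v ∈ e, c v = true)).card

open Finset

section OrderedSums

variable {ι β : Type*} [AddCommMonoid β] [PartialOrder β] [IsOrderedAddMonoid β]
  {f : ι → β}

theorem Finset.sum_le_sum_of_card_eq_of_forall_le {s t : Finset ι} (hst : #s = #t)
    (h : ∀ a ∈ s, ∀ b ∈ t, f a ≤ f b) : ∑ a ∈ s, f a ≤ ∑ b ∈ t, f b := by
  let σ := equivOfCardEq hst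
  calc ∑ a ∈ s, f a = ∑ a : s, f a := (sum_coe_sort s f).symm
    _ ≤ ∑ a : s, f (σ a) := sum_le_sum fun a _ => h a a.2 (σ a) (σ a).2
    _ = ∑ b : t, f b := σ.sum_comp (fun b : t => f b)
    _ = ∑ b ∈ t, f b := sum_coe_sort t f

theorem Finset.sum_le_sum_of_card_eq_of_forall_sdiff_le [DecidableEq ι] {s t : Finset ι}
    (hst : #s = #t) (h : ∀ a ∈ s \ t, ∀ b ∈ t \ s, f a ≤ f b) :
    ∑ a ∈ s, f a ≤ ∑ b ∈ t, f b := by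
  rw [← sum_inter_add_sum_sdiff s t, ← sum_inter_add_sum_sdiff t s, inter_comm]
  exact add_le_add le_rfl (sum_le_sum_of_card_eq_of_forall_le (card_sdiff_comm hst) h)

end OrderedSums

namespace Fin

variable {N : ℕ} {β : Type*} [AddCommMonoid β] [PartialOrder β] [IsOrderedAddMonoid β]
  {f : Fin N → β}

theorem card_filter_sub_le_val {k : ℕ} (hk : k ≤ N) : #{i : Fin N | N - k ≤ i} = k := by
  have h := card_filter_add_card_filter_not (s := (univ : Finset (Fin N)))
    (p := fun i : Fin N => (i : ℕ) < N - k)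
  simp only [card_filter_val_lt, not_lt, card_univ, Fintype.card_fin] at h
  omega

theorem sum_le_sum_filter_val_lt_card_of_antitone (hf : Antitone f) (s : Finset (Fin N)) :
    ∑ i ∈ s, f i ≤ ∑ i ∈ univ.filter (fun i : Fin N => (i : ℕ) < #s), f i := by
  refine sum_le_sum_of_card_eq_of_forall_sdiff_le ?_ fun a ha b hb => hf ?_
  · rw [card_filter_val_lt, min_eq_right (card_le_univ s |>.trans_eq (Fintype.card_fin N))]
  · simp only [mem_sdiff, mem_filter, mem_univ, true_and] at ha hb
    exact Fin.le_def.2 (by omega)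

theorem sum_filter_sub_card_le_val_le_sum_of_antitone (hf : Antitone f) (s : Finset (Fin N)) :
    ∑ i ∈ univ.filter (fun i : Fin N => N - #s ≤ (i : ℕ)), f i ≤ ∑ i ∈ s, f i := by
  refine sum_le_sum_of_card_eq_of_forall_sdiff_le ?_ fun a ha b hb => hf ?_
  · exact card_filter_sub_le_val (card_le_univ s |>.trans_eq (Fintype.card_fin N))
  · simp only [mem_sdiff, mem_filter, mem_univ, true_and] at ha hb
    exact Fin.le_def.2 (by omega)

theorem sum_le_sum_filter_val_lt_card_of_equiv {V : Type*} (hf : Antitone f) (e : Fin N ≃ V)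
    {w : V → β} (hw : ∀ i, f i = w (e i)) (s : Finset V) :
    ∑ v ∈ s, w v ≤ ∑ i ∈ univ.filter (fun i : Fin N => (i : ℕ) < #s), f i := by
  simpa [sum_map, hw] using sum_le_sum_filter_val_lt_card_of_antitone hf (s.map e.symm.toEmbedding)

theorem sum_filter_sub_card_le_val_le_sum_of_equiv {V : Type*} (hf : Antitone f) (e : Fin N ≃ V)
    {w : V → β} (hw : ∀ i, f i = w (e i)) (s : Finset V) :
    ∑ i ∈ univ.filter (fun i : Fin N => N - #s ≤ (i : ℕ)), f i ≤ ∑ v ∈ s, w v := by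
  simpa [sum_map, hw] using
    sum_filter_sub_card_le_val_le_sum_of_antitone hf (s.map e.symm.toEmbedding)

end Fin

namespace SimpleGraph

variable {V : Type*} (G : SimpleGraph V)

def restrict (s : Set V) : SimpleGraph V where
  Adj a b := G.Adj a b ∧ a ∈ s ∧ b ∈ s
  symm := ⟨fun _ _ h => ⟨h.1.symm, h.2.2, h.2.1⟩⟩
  loopless := ⟨fun a h => G.loopless.irrefl a h.1⟩

@[simp]
theorem restrict_adj {s : Set V} {a b : V} :
    (G.restrict s).Adj a b ↔ G.Adj a b ∧ a ∈ s ∧ b ∈ s :=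
  Iff.rfl

variable [Fintype V] [DecidableEq V] [DecidableRel G.Adj] (s : Finset V)

instance : DecidableRel (G.restrict s).Adj :=
  fun a b => inferInstanceAs (Decidable (G.Adj a b ∧ a ∈ s ∧ b ∈ s))

theorem edgeFinset_restrict :
    (G.restrict s).edgeFinset = G.edgeFinset.filter (fun e => ∀ v ∈ e, v ∈ s) := by
  ext e
  induction e using Sym2.ind with
  | h a b => simp

theorem neighborFinset_restrict {v : V} (hv : v ∈ s) :
    (G.restrict s).neighborFinset v = (G.neighborFinset v).filter (· ∈ s) := by
  ext w
  simp [hv]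

theorem degree_restrict_of_notMem {v : V} (hv : v ∉ s) : (G.restrict s).degree v = 0 := by
  rw [← card_neighborFinset_eq_degree, card_eq_zero, eq_empty_iff_forall_notMem]
  simp [hv]

theorem degree_restrict_le {v : V} (hv : v ∈ s) :
    (G.restrict s).degree v ≤ min (G.degree v) (#s - 1) := by
  rw [← card_neighborFinset_eq_degree, neighborFinset_restrict G s hv]
  refine le_min (card_filter_le _ _) ?_
  rw [← card_erase_of_mem hv]
  exact card_le_card fun w hw => by
    simp only [mem_filter, mem_neighborFinset] at hw
    exact mem_erase.2 ⟨hw.1.ne', hw.2⟩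

theorem degree_eq_degree_restrict_add {v : V} (hv : v ∈ s) :
    G.degree v = (G.restrict s).degree v + #((G.neighborFinset v).filter (· ∉ s)) := by
  rw [← card_neighborFinset_eq_degree, ← card_neighborFinset_eq_degree,
    neighborFinset_restrict G s hv, card_filter_add_card_filter_not]

theorem sum_degree_restrict :
    ∑ v ∈ s, (G.restrict s).degree v = 2 * #(G.restrict s).edgeFinset := by
  rw [← sum_degrees_eq_twice_card_edges]
  exact sum_subset (subset_univ s) fun v _ hv => G.degree_restrict_of_notMem s hv

theorem two_mul_card_edgeFinset_restrict_le :
    2 * #(G.restrict s).edgeFinset ≤ ∑ v ∈ s, min (G.degree v) (#s - 1) := by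
  rw [← sum_degree_restrict]
  exact sum_le_sum fun v hv => G.degree_restrict_le s hv

theorem card_edgeFinset_restrict_le_choose_two : #(G.restrict s).edgeFinset ≤ (#s).choose 2 := by
  rw [Nat.choose_two_right, Nat.le_div_iff_mul_le two_pos, mul_comm]
  calc 2 * #(G.restrict s).edgeFinset
      ≤ ∑ v ∈ s, min (G.degree v) (#s - 1) := G.two_mul_card_edgeFinset_restrict_le s
    _ ≤ ∑ _v ∈ s, (#s - 1) := sum_le_sum fun _ _ => min_le_right _ _
    _ = #s * (#s - 1) := by rw [sum_const, smul_eq_mul]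

theorem sum_card_neighborFinset_filter_notMem_le :
    ∑ v ∈ s, #((G.neighborFinset v).filter (· ∉ s)) ≤ ∑ v ∈ sᶜ, G.degree v :=
  calc ∑ v ∈ s, #((G.neighborFinset v).filter (· ∉ s))
      = ∑ v ∈ s, #(sᶜ.bipartiteAbove G.Adj v) := by
        refine sum_congr rfl fun v _ => congrArg card ?_
        ext w
        simp [bipartiteAbove, and_comm]
    _ = ∑ w ∈ sᶜ, #(s.bipartiteBelow G.Adj w) :=
        sum_card_bipartiteAbove_eq_sum_card_bipartiteBelow _
    _ ≤ ∑ w ∈ sᶜ, G.degree w := sum_le_sum fun w _ => by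
        rw [← card_neighborFinset_eq_degree]
        exact card_le_card fun v hv => by simpa [G.adj_comm] using ((mem_bipartiteBelow _).1 hv).2

theorem sum_degree_le_two_mul_card_edgeFinset_restrict_add :
    ∑ v ∈ s, G.degree v ≤ 2 * #(G.restrict s).edgeFinset + ∑ v ∈ sᶜ, G.degree v := by
  rw [sum_congr rfl fun v hv => G.degree_eq_degree_restrict_add s hv, sum_add_distrib,
    sum_degree_restrict]
  exact add_le_add le_rfl (G.sum_card_neighborFinset_filter_notMem_le s)

section DegreeSequence

variable {N : ℕ} {d : Fin N → ℕ} {e : Fin N ≃ V}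

theorem two_mul_card_edgeFinset_restrict_le_sum_head (hd_anti : Antitone d)
    (hd : ∀ i, d i = G.degree (e i)) :
    2 * #(G.restrict s).edgeFinset
      ≤ ∑ i ∈ univ.filter (fun i : Fin N => (i : ℕ) < #s), min (d i) (#s - 1) :=
  (G.two_mul_card_edgeFinset_restrict_le s).trans <|
    Fin.sum_le_sum_filter_val_lt_card_of_equiv (fun _ _ hij => min_le_min_right _ (hd_anti hij))
      e (fun i => by rw [hd]) s

theorem sum_tail_le_two_mul_card_edgeFinset_restrict_add_sum_head (hd_anti : Antitone d)
    (hd : ∀ i, d i = G.degree (e i)) :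
    ∑ i ∈ univ.filter (fun i : Fin N => N - #s ≤ (i : ℕ)), d i
      ≤ 2 * #(G.restrict s).edgeFinset
        + ∑ i ∈ univ.filter (fun i : Fin N => (i : ℕ) < N - #s), d i := by
  have hcard : #sᶜ = N - #s := by rw [card_compl, ← Fintype.card_congr e, Fintype.card_fin]
  calc ∑ i ∈ univ.filter (fun i : Fin N => N - #s ≤ (i : ℕ)), d i
      ≤ ∑ v ∈ s, G.degree v := Fin.sum_filter_sub_card_le_val_le_sum_of_equiv hd_anti e hd s
    _ ≤ 2 * #(G.restrict s).edgeFinset + ∑ v ∈ sᶜ, G.degree v :=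
        G.sum_degree_le_two_mul_card_edgeFinset_restrict_add s
    _ ≤ _ := by
        grw [Fin.sum_le_sum_filter_val_lt_card_of_equiv hd_anti e hd sᶜ, hcard]

end DegreeSequence

end SimpleGraph

theorem dyadicity_bounds_general {V : Type*} [Fintype V] [DecidableEq V]
    (G : SimpleGraph V) [DecidableRel G.Adj] (c : V → Bool)
    (N M n1 n0 : ℕ) (hM : G.edgeFinset.card = M)
    (hn1 : (Finset.univ.filter (fun v => c v = true)).card = n1)
    (hn0 : n0 = N - n1)
    (d : Fin N → ℕ) (hanti : Antitone d)
    (e : Fin N ≃ V) (hd : ∀ i, d i = G.degree (e i))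
    (UBm11 : ℕ)
    (hUB : UBm11 = min M (min (n1.choose 2)
      (((∑ i ∈ Finset.univ.filter (fun i : Fin N => (i : ℕ) < n1),
          min (d i) (n1 - 1)) + 1) / 2)))
    (T H LBm11 : ℤ)
    (hT : T = ∑ i ∈ Finset.univ.filter (fun i : Fin N => N - n1 ≤ (i : ℕ)), (d i : ℤ))
    (hH : H = ∑ i ∈ Finset.univ.filter (fun i : Fin N => (i : ℕ) < n0), (d i : ℤ))
    (hLB : LBm11 = max 0 ((T - H).fdiv 2))
    (δ mbar11 D Dmax Dmin : ℝ)
    (hδ : δ = 2 * M / (N * ((N : ℝ) - 1)))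
    (hmbar : mbar11 = ((n1 : ℝ) * ((n1 : ℝ) - 1) / 2) * δ)
    (hD : D = (m11 G c : ℝ) / mbar11)
    (hDmax : Dmax = (UBm11 : ℝ) / mbar11)
    (hDmin : Dmin = (LBm11 : ℝ) / mbar11) :
    Dmin ≤ D ∧ D ≤ Dmax := by
  set S : Finset V := univ.filter (fun v => c v = true)
  have hm11 : m11 G c = #(G.restrict S).edgeFinset := by
    simp [m11, S, SimpleGraph.edgeFinset_restrict]
  have hupper : m11 G c ≤ UBm11 := by
    have h2m := G.two_mul_card_edgeFinset_restrict_le_sum_head S hanti hd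
    have hchoose := G.card_edgeFinset_restrict_le_choose_two S
    rw [hn1] at h2m hchoose
    rw [hUB, ← hM, hm11]
    exact le_min (card_le_card (SimpleGraph.edgeFinset_mono fun _ _ h => h.1))
      (le_min hchoose (by omega))
  have hlower : LBm11 ≤ m11 G c := by
    have h := G.sum_tail_le_two_mul_card_edgeFinset_restrict_add_sum_head S hanti hd
    rw [hn1, ← hm11] at h
    have hTH : T - H ≤ 2 * (m11 G c : ℤ) := by
      rw [hT, hH, hn0, ← Nat.cast_sum, ← Nat.cast_sum]; omega
    rw [hLB, Int.fdiv_eq_ediv_of_nonneg _ two_pos.le]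
    omega
  have hmbar : 0 ≤ mbar11 := by
    have hcast (k : ℕ) : 0 ≤ (k : ℝ) * (k - 1) := by
      rcases k with _ | k <;> push_cast <;> nlinarith
    rw [hmbar, hδ]
    exact mul_nonneg (div_nonneg (hcast n1) two_pos.le) (div_nonneg (by positivity) (hcast N))
  rw [hD, hDmax, hDmin]
  exact ⟨div_le_div_of_nonneg_right (by exact_mod_cast hlower) hmbar,
    div_le_div_of_nonneg_right (by exact_mod_cast hupper) hmbar⟩

/-- the dyadicity `D = m11 / m̄11` is bounded by
`D_min = LBm11 / m̄11` and `D_max = UBm11 / m̄11`, where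
`UBm11 = min(M, binom(n1,2), ⌈(∑_{i=1}^{n1} min(d_(i), n1−1))/2⌉)` and
`LBm11 = max(0, ⌊(T(n1) − H(n0))/2⌋)` (difference in ℤ, floor division `Int.fdiv`). -/
theorem dyadicity_bounds {V : Type*} [Fintype V] [DecidableEq V]
    (G : SimpleGraph V) [DecidableRel G.Adj] (c : V → Bool)
    (N M n1 n0 : ℕ) (hN : Fintype.card V = N) (hM : G.edgeFinset.card = M)
    (hn1 : (Finset.univ.filter (fun v => c v = true)).card = n1)
    (hn0 : n0 = N - n1)
    (hN2 : 2 ≤ N) (hM1 : 1 ≤ M) (hn12 : 2 ≤ n1)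
    (d : Fin N → ℕ) (hanti : Antitone d)
    (e : Fin N ≃ V) (hd : ∀ i, d i = G.degree (e i))
    (UBm11 : ℕ)
    (hUB : UBm11 = min M (min (n1.choose 2)
      (((∑ i ∈ Finset.univ.filter (fun i : Fin N => (i : ℕ) < n1),
          min (d i) (n1 - 1)) + 1) / 2)))
    (T H LBm11 : ℤ)
    (hT : T = ∑ i ∈ Finset.univ.filter (fun i : Fin N => N - n1 ≤ (i : ℕ)), (d i : ℤ))
    (hH : H = ∑ i ∈ Finset.univ.filter (fun i : Fin N => (i : ℕ) < n0), (d i : ℤ))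
    (hLB : LBm11 = max 0 ((T - H).fdiv 2))
    (δ mbar11 D Dmax Dmin : ℝ)
    (hδ : δ = 2 * M / (N * ((N : ℝ) - 1)))
    (hmbar : mbar11 = ((n1 : ℝ) * ((n1 : ℝ) - 1) / 2) * δ)
    (hD : D = (m11 G c : ℝ) / mbar11)
    (hDmax : Dmax = (UBm11 : ℝ) / mbar11)
    (hDmin : Dmin = (LBm11 : ℝ) / mbar11) :
    Dmin ≤ D ∧ D ≤ Dmax :=
  dyadicity_bounds_general G c N M n1 n0 hM hn1 hn0 d hanti e hd UBm11 hUB T H LBm11 hT hH hLB δ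
    mbar11 D Dmax Dmin hδ hmbar hD hDmax hDmin
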